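/- arXiv:2509.08102 — 2 statements merged into one kernel-verified Lean document; each statement's English description precedes it below -/
import Mathlib

section
/- Let d ≥ 1, let p and q be probability density functions on ℝ^d (with respect to Lebesgue measure), and let R : ℝ^d → [0,1] be measurable with ∫ R(θ) p(θ) dθ > 0 and ∫ R(θ) q(θ) dθ > 0. Then |(∫ R p)²/(∫ R² p) − (∫ R q)²/(∫ R² q)| ≤ 3 (∫ |p(θ) − q(θ)| dθ) / (∫ R(θ)² q(θ) dθ). -/
open MeasureTheory

/-!
Write `A = ∫ R p`, `B = ∫ R² p` and `A', B'` for the same integrals against `q`, and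
`ε = ∫ |p - q|`. Since `0 ≤ R ≤ 1`, both `|A - A'|` and `|B - B'|` are at most `ε`, and
`A, A' ≤ 1`. Then `A² B' - A'² B = B (A² - A'²) + A² (B' - B)` has absolute value at most
`B · 2ε + A² ε ≤ 3 ε B`, using `A² ≤ B` (Cauchy–Schwarz); dividing by `B B'` gives the claim.
-/

section

variable {α : Type*} [MeasurableSpace α] {μ : Measure α} {f p q : α → ℝ}

lemma integrable_mul_of_nonneg_of_le_one (hf : AEStronglyMeasurable f μ)
    (hf0 : ∀ x, 0 ≤ f x) (hf1 : ∀ x, f x ≤ 1) (hp : Integrable p μ) :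
    Integrable (fun x => f x * p x) μ :=
  hp.bdd_mul hf <| .of_forall fun x => by
    rw [Real.norm_eq_abs, abs_of_nonneg (hf0 x)]
    exact hf1 x

lemma integral_mul_le_one (hf0 : ∀ x, 0 ≤ f x) (hf1 : ∀ x, f x ≤ 1)
    (hp0 : ∀ x, 0 ≤ p x) (hp : Integrable p μ) (hp1 : ∫ x, p x ∂μ = 1) :
    ∫ x, f x * p x ∂μ ≤ 1 :=
  hp1 ▸ integral_mono_of_nonneg (.of_forall fun x => mul_nonneg (hf0 x) (hp0 x)) hp
    (.of_forall fun x => mul_le_of_le_one_left (hp0 x) (hf1 x))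

lemma abs_integral_mul_sub_integral_mul_le (hf : AEStronglyMeasurable f μ)
    (hf0 : ∀ x, 0 ≤ f x) (hf1 : ∀ x, f x ≤ 1) (hp : Integrable p μ) (hq : Integrable q μ) :
    |∫ x, f x * p x ∂μ - ∫ x, f x * q x ∂μ| ≤ ∫ x, |p x - q x| ∂μ := by
  have hfp := integrable_mul_of_nonneg_of_le_one hf hf0 hf1 hp
  have hfq := integrable_mul_of_nonneg_of_le_one hf hf0 hf1 hq
  rw [← integral_sub hfp hfq]
  refine (abs_integral_le_integral_abs).trans <|
    integral_mono (hfp.sub hfq).abs (hp.sub hq).abs fun x => ?_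
  rw [← mul_sub, abs_mul, abs_of_nonneg (hf0 x)]
  exact mul_le_of_le_one_left (abs_nonneg _) (hf1 x)

lemma sq_integral_mul_le_integral_sq_mul (hp0 : ∀ x, 0 ≤ p x) (hp : Integrable p μ)
    (hp1 : ∫ x, p x ∂μ = 1) (hfp : Integrable (fun x => f x * p x) μ)
    (hf2p : Integrable (fun x => f x ^ 2 * p x) μ) :
    (∫ x, f x * p x ∂μ) ^ 2 ≤ ∫ x, f x ^ 2 * p x ∂μ := by
  set a := ∫ x, f x * p x ∂μ
  have hvar : 0 ≤ ∫ x, (f x ^ 2 * p x - 2 * a * (f x * p x) + a ^ 2 * p x) ∂μ :=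
    integral_nonneg fun x => by
      rw [show f x ^ 2 * p x - 2 * a * (f x * p x) + a ^ 2 * p x = (f x - a) ^ 2 * p x by ring]
      exact mul_nonneg (sq_nonneg _) (hp0 x)
  have hsub : Integrable (fun x => f x ^ 2 * p x - 2 * a * (f x * p x)) μ :=
    hf2p.sub (hfp.const_mul _)
  rw [integral_add hsub (hp.const_mul _), integral_sub hf2p (hfp.const_mul _),
    integral_const_mul, integral_const_mul, hp1] at hvar
  nlinarith

end

lemma abs_sq_div_sub_sq_div_le {a a' b b' ε : ℝ} (ha : 0 < a) (ha1 : a ≤ 1) (ha' : 0 ≤ a')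
    (ha'1 : a' ≤ 1) (hab : a ^ 2 ≤ b) (hb' : 0 < b') (haa' : |a - a'| ≤ ε)
    (hbb' : |b - b'| ≤ ε) :
    |a ^ 2 / b - a' ^ 2 / b'| ≤ 3 * ε / b' := by
  have hb : 0 < b := (pow_pos ha 2).trans_le hab
  have hsq : |a ^ 2 - a' ^ 2| ≤ 2 * ε := by
    rw [sq_sub_sq, abs_mul, abs_of_nonneg (by linarith : 0 ≤ a + a')]
    exact mul_le_mul (by linarith) haa' (abs_nonneg _) zero_le_two
  have hcross : |a ^ 2 * b' - b * a' ^ 2| ≤ 3 * ε * b :=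
    calc |a ^ 2 * b' - b * a' ^ 2| = |b * (a ^ 2 - a' ^ 2) + a ^ 2 * (b' - b)| := by ring_nf
      _ ≤ b * (2 * ε) + b * ε := by
        refine (abs_add_le _ _).trans (add_le_add ?_ ?_)
        · rw [abs_mul, abs_of_pos hb]
          exact mul_le_mul_of_nonneg_left hsq hb.le
        · rw [abs_mul, abs_of_nonneg (sq_nonneg a), abs_sub_comm]
          exact mul_le_mul hab hbb' (abs_nonneg _) hb.le
      _ = 3 * ε * b := by ring
  rw [div_sub_div _ _ hb.ne' hb'.ne', abs_div, abs_of_pos (mul_pos hb hb'),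
    div_le_div_iff₀ (mul_pos hb hb') hb']
  calc |a ^ 2 * b' - b * a' ^ 2| * b' ≤ 3 * ε * b * b' :=
        mul_le_mul_of_nonneg_right hcross hb'.le
    _ = 3 * ε * (b * b') := by ring

theorem ress_tv_stability_general
    (d : ℕ) (p q R : (Fin d → ℝ) → ℝ)
    (hR_meas : Measurable R)
    (hp_nonneg : ∀ θ, 0 ≤ p θ) (hq_nonneg : ∀ θ, 0 ≤ q θ)
    (hp_int : Integrable p) (hq_int : Integrable q)
    (hp_one : ∫ θ, p θ = 1) (hq_one : ∫ θ, q θ = 1)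
    (hR_nonneg : ∀ θ, 0 ≤ R θ) (hR_le_one : ∀ θ, R θ ≤ 1)
    (hRp_pos : 0 < ∫ θ, R θ * p θ) (hRq_pos : 0 < ∫ θ, R θ * q θ) :
    |(∫ θ, R θ * p θ) ^ 2 / (∫ θ, R θ ^ 2 * p θ)
        - (∫ θ, R θ * q θ) ^ 2 / (∫ θ, R θ ^ 2 * q θ)|
      ≤ 3 * (∫ θ, |p θ - q θ|) / (∫ θ, R θ ^ 2 * q θ) := by
  have hR := hR_meas.aestronglyMeasurable (μ := volume)
  have hR2 := (hR_meas.pow_const 2).aestronglyMeasurable (μ := volume)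
  have hR2_nonneg : ∀ θ, 0 ≤ R θ ^ 2 := fun θ => sq_nonneg _
  have hR2_le_one : ∀ θ, R θ ^ 2 ≤ 1 := fun θ => pow_le_one₀ (hR_nonneg θ) (hR_le_one θ)
  have hp_sq := sq_integral_mul_le_integral_sq_mul hp_nonneg hp_int hp_one
    (integrable_mul_of_nonneg_of_le_one hR hR_nonneg hR_le_one hp_int)
    (integrable_mul_of_nonneg_of_le_one hR2 hR2_nonneg hR2_le_one hp_int)
  have hq_sq := sq_integral_mul_le_integral_sq_mul hq_nonneg hq_int hq_one
    (integrable_mul_of_nonneg_of_le_one hR hR_nonneg hR_le_one hq_int)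
    (integrable_mul_of_nonneg_of_le_one hR2 hR2_nonneg hR2_le_one hq_int)
  exact abs_sq_div_sub_sq_div_le hRp_pos
    (integral_mul_le_one hR_nonneg hR_le_one hp_nonneg hp_int hp_one) hRq_pos.le
    (integral_mul_le_one hR_nonneg hR_le_one hq_nonneg hq_int hq_one) hp_sq
    ((pow_pos hRq_pos 2).trans_le hq_sq)
    (abs_integral_mul_sub_integral_mul_le hR hR_nonneg hR_le_one hp_int hq_int)
    (abs_integral_mul_sub_integral_mul_le hR2 hR2_nonneg hR2_le_one hp_int hq_int)

/-- **Stability of the RESS under total-variation perturbation of the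
proposal density.** For probability densities `p`, `q` on `ℝ^d` and a
measurable `R : ℝ^d → [0,1]` with `∫ R p > 0` and `∫ R q > 0`,
`|(∫ R p)²/(∫ R² p) − (∫ R q)²/(∫ R² q)| ≤ 3 (∫ |p − q|) / (∫ R² q)`. -/
theorem ress_tv_stability
    (d : ℕ) (hd : 1 ≤ d) (p q R : (Fin d → ℝ) → ℝ)
    (hp_meas : Measurable p) (hq_meas : Measurable q) (hR_meas : Measurable R)
    (hp_nonneg : ∀ θ, 0 ≤ p θ) (hq_nonneg : ∀ θ, 0 ≤ q θ)
    (hp_int : Integrable p) (hq_int : Integrable q)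
    (hp_one : ∫ θ, p θ = 1) (hq_one : ∫ θ, q θ = 1)
    (hR_nonneg : ∀ θ, 0 ≤ R θ) (hR_le_one : ∀ θ, R θ ≤ 1)
    (hRp_pos : 0 < ∫ θ, R θ * p θ) (hRq_pos : 0 < ∫ θ, R θ * q θ) :
    |(∫ θ, R θ * p θ) ^ 2 / (∫ θ, R θ ^ 2 * p θ)
        - (∫ θ, R θ * q θ) ^ 2 / (∫ θ, R θ ^ 2 * q θ)|
      ≤ 3 * (∫ θ, |p θ - q θ|) / (∫ θ, R θ ^ 2 * q θ) :=
  ress_tv_stability_general d p q R hR_meas hp_nonneg hq_nonneg hp_int hq_int hp_one hq_one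
    hR_nonneg hR_le_one hRp_pos hRq_pos
end

section
/- Let α ∈ (0,1), let p ≥ 1 be a real number, and for each integer n ≥ 1 let k_n = ⌊log n / log(1/α)⌋. Then ((α n)^p − 1)/(1 − α^p) ≤ ∑_{k=1}^{k_n} ⌈α^{−k}⌉^p ≤ (1 + α)^p (n^p − 1)/(1 − α^p), where ⌈x⌉ denotes the ceiling of the real number x. In particular, the total weight-recomputation cost C_W(n) = ∑_{k=1}^{k_n} ⌈α^{−k}⌉^p of exponentially spaced replenishment times n_k* = ⌈α^{−k}⌉ grows on the order n^p. -/
open Real Finset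

/-!
With `β = α⁻¹ > 1` and `K = k_n`, the choice of `K` is exactly `β ^ K ≤ n < β ^ (K + 1)`.
Since `β ^ k ≤ ⌈β ^ k⌉ ≤ (1 + α) β ^ k` for `k ≥ 1`, the cost is squeezed between one and
`(1 + α) ^ p` times the geometric sum `∑_{k=1}^K (β ^ p) ^ k = ((β ^ K) ^ p - 1) / (1 - α ^ p)`,
and `α n ≤ β ^ K ≤ n` finishes both bounds.
-/

lemma ceil_le_one_add_mul {K : Type*} [Field K] [LinearOrder K] [IsStrictOrderedRing K]
    [FloorRing K] {a x : K} (h : 1 ≤ a * x) : (⌈x⌉ : K) ≤ (1 + a) * x :=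
  calc (⌈x⌉ : K) ≤ x + 1 := (Int.ceil_lt_add_one x).le
    _ ≤ x + a * x := by gcongr
    _ = (1 + a) * x := by ring

lemma geom_sum_Icc_one {K : Type*} [Field K] {r : K} (hr0 : r ≠ 0) (hr1 : r ≠ 1) (m : ℕ) :
    ∑ k ∈ Icc 1 m, r ^ k = (r ^ m - 1) / (1 - r⁻¹) := by
  rw [← Ico_add_one_right_eq_Icc, geom_sum_Ico hr1 (Nat.le_add_left 1 m), pow_succ]
  field_simp

section FloorLog

variable {b x : ℝ}

lemma pow_natFloor_log_div_log_le (hb : 1 < b) (hx : 1 ≤ x) :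
    b ^ ⌊log x / log b⌋₊ ≤ x := by
  rw [log_div_log, ← rpow_natCast]
  exact (le_logb_iff_rpow_le hb (by linarith)).1 (Nat.floor_le (logb_nonneg hb hx))

lemma lt_pow_natFloor_log_div_log_add_one (hb : 1 < b) (hx : 0 < x) :
    x < b ^ (⌊log x / log b⌋₊ + 1) := by
  rw [log_div_log, ← rpow_natCast, Nat.cast_add_one]
  exact (logb_lt_iff_lt_rpow hb hx).1 (Nat.lt_floor_add_one _)

end FloorLog

section InvPow

variable {α : ℝ}

lemma sum_Icc_inv_pow_rpow {p : ℝ} (hα : 0 < α) (hαp : α ^ p ≠ 1) (m : ℕ) :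
    ∑ k ∈ Icc 1 m, (α⁻¹ ^ k) ^ p = ((α⁻¹ ^ m) ^ p - 1) / (1 - α ^ p) := by
  have hα' : 0 ≤ α⁻¹ := by positivity
  simp_rw [← rpow_pow_comm hα']
  rw [geom_sum_Icc_one (by positivity), inv_rpow hα.le, inv_inv]
  rwa [inv_rpow hα.le, inv_ne_one]

lemma ceil_inv_pow_le (hα : 0 < α) (hα1 : α ≤ 1) {k : ℕ} (hk : k ≠ 0) :
    (⌈α⁻¹ ^ k⌉ : ℝ) ≤ (1 + α) * α⁻¹ ^ k := by
  refine ceil_le_one_add_mul ?_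
  calc 1 = α * α⁻¹ := (mul_inv_cancel₀ hα.ne').symm
    _ ≤ α * α⁻¹ ^ k := by gcongr; exact le_self_pow₀ (one_le_inv₀ hα |>.2 hα1) hk

end InvPow

/-- **Cost of exponentially spaced replenishment times.** For `α ∈ (0,1)`,
`p ≥ 1` and `n ≥ 1`, with `k_n = ⌊log n / log(1/α)⌋`, the total
weight-recomputation cost `C_W(n) = ∑_{k=1}^{k_n} ⌈α^{−k}⌉^p` satisfies
`((α n)^p − 1)/(1 − α^p) ≤ C_W(n) ≤ (1 + α)^p (n^p − 1)/(1 − α^p)`,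
hence it grows on the order `n^p`. -/
theorem replenishment_cost_bounds
    (α : ℝ) (hα : α ∈ Set.Ioo (0 : ℝ) 1) (p : ℝ) (hp : 1 ≤ p)
    (n : ℕ) (hn : 1 ≤ n) :
    ((α * (n : ℝ)) ^ p - 1) / (1 - α ^ p)
        ≤ ∑ k ∈ Finset.Icc 1 ⌊Real.log n / Real.log (1 / α)⌋₊,
            ((⌈α⁻¹ ^ k⌉ : ℝ)) ^ p ∧
    ∑ k ∈ Finset.Icc 1 ⌊Real.log n / Real.log (1 / α)⌋₊,
        ((⌈α⁻¹ ^ k⌉ : ℝ)) ^ p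
      ≤ (1 + α) ^ p * ((n : ℝ) ^ p - 1) / (1 - α ^ p) := by
  obtain ⟨hα0, hα1⟩ := hα
  have hp0 : 0 < p := by linarith
  have hβ : 1 < α⁻¹ := one_lt_inv₀ hα0 |>.2 hα1
  have hαp : α ^ p < 1 := rpow_lt_one hα0.le hα1 hp0
  have hn1 : (1 : ℝ) ≤ n := Nat.one_le_cast.2 hn
  rw [one_div]
  have hle := pow_natFloor_log_div_log_le hβ hn1
  have hlt := lt_pow_natFloor_log_div_log_add_one hβ (x := n) (by linarith)
  set K := ⌊log n / log α⁻¹⌋₊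
  have hαn : α * n ≤ α⁻¹ ^ K := by
    have := mul_lt_mul_of_pos_left hlt hα0
    rw [pow_succ', ← mul_assoc, mul_inv_cancel₀ hα0.ne', one_mul] at this
    exact this.le
  have hgeom := sum_Icc_inv_pow_rpow hα0 hαp.ne K
  constructor
  · calc ((α * n) ^ p - 1) / (1 - α ^ p) ≤ ((α⁻¹ ^ K) ^ p - 1) / (1 - α ^ p) := by
          gcongr
      _ = ∑ k ∈ Icc 1 K, (α⁻¹ ^ k) ^ p := hgeom.symm
      _ ≤ ∑ k ∈ Icc 1 K, (⌈α⁻¹ ^ k⌉ : ℝ) ^ p :=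
          sum_le_sum fun k _ ↦ rpow_le_rpow (by positivity) (Int.le_ceil _) hp0.le
  · calc ∑ k ∈ Icc 1 K, (⌈α⁻¹ ^ k⌉ : ℝ) ^ p ≤ ∑ k ∈ Icc 1 K, (1 + α) ^ p * (α⁻¹ ^ k) ^ p := by
          refine sum_le_sum fun k hk ↦ ?_
          rw [← mul_rpow (by linarith) (by positivity)]
          exact rpow_le_rpow (by positivity)
            (ceil_inv_pow_le hα0 hα1.le (by grind)) hp0.le
      _ = (1 + α) ^ p * (((α⁻¹ ^ K) ^ p - 1) / (1 - α ^ p)) := by rw [← mul_sum, hgeom]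
      _ ≤ (1 + α) ^ p * (((n : ℝ) ^ p - 1) / (1 - α ^ p)) := by
          gcongr
      _ = (1 + α) ^ p * ((n : ℝ) ^ p - 1) / (1 - α ^ p) := (mul_div_assoc _ _ _).symm
end
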